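/- Let L : ℝ^{n×m} → ℝ^ℓ be linear, y ∈ image(L), X̄ a limit of global minimizers X_γ of f_γ over L^{-1}(y) as γ → 0⁺, and suppose X* ∈ L^{-1}(y) has rank r = min rank over L^{-1}(y). Then Π_{i=1}^r σ_i(X*) ≥ Π_{i=1}^r σ_i(X̄). (Direct comparison version of the convergence lemma.) -/

import Mathlib

open Matrix Filter

lemma isHerm {n m : ℕ} (X : Matrix (Fin n) (Fin m) ℝ) : (X * Xᵀ).IsHermitian := by
  have h : Xᵀ = Xᴴ := by
    ext i j
    simp [Matrix.conjTranspose_apply]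
  rw [h]
  exact Matrix.isHermitian_mul_conjTranspose_self X

/-- The singular values of `X`, in decreasing order. -/
noncomputable def singval {n m : ℕ} (X : Matrix (Fin n) (Fin m) ℝ) : Fin n → ℝ :=
  fun i => Real.sqrt
    (((isHerm X).eigenvalues ∘ Tuple.sort ((isHerm X).eigenvalues)) i.rev)

/-- `f_γ(X) = log det(X Xᵀ + γ I)`. -/
noncomputable def fgamma {n m : ℕ} (γ : ℝ) (X : Matrix (Fin n) (Fin m) ℝ) : ℝ :=
  Real.log (X * Xᵀ + γ • (1 : Matrix (Fin n) (Fin n) ℝ)).det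

/-!
Write `λ(X)` for the eigenvalues of `X Xᵀ` and `e_r` for the `r`-th elementary symmetric
function. Since `det (X Xᵀ + γ I) = ∏ (λᵢ(X) + γ) ≥ e_r(λ(X)) γ^(n-r)`, while for `X*` of rank `r`
this determinant is `γ^(n-r) ∏_{λᵢ(X*) ≠ 0} (λᵢ(X*) + γ)`, minimality of `X_γ` gives
`e_r(λ(X_γ)) ≤ ∏_{λᵢ(X*) ≠ 0} (λᵢ(X*) + γ)`. As `e_r ∘ λ` is, up to sign, a coefficient of the
characteristic polynomial of `X Xᵀ`, it is continuous, and `γ → 0⁺` yields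
`e_r(λ(X̄)) ≤ e_r(λ(X*))`. The left side dominates the product of the `r` largest eigenvalues of
`X̄ X̄ᵀ`, the right side equals that of `X* X*ᵀ`; taking square roots gives the claim.
-/

open Finset

section Esymm

variable {ι R : Type*} [Fintype ι]

theorem esymm_eq_prod_of_eq_zero_of_notMem [CommSemiring R] (f : ι → R) {S : Finset ι}
    (hS : ∀ i ∉ S, f i = 0) : (univ.val.map f).esymm #S = ∏ i ∈ S, f i := by
  rw [esymm_map_val]
  refine sum_eq_single_of_mem S (mem_powersetCard.2 ⟨subset_univ S, rfl⟩) fun T hT hne => ?_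
  obtain ⟨i, hiT, hiS⟩ := not_subset.1 fun hTS =>
    hne (eq_of_subset_of_card_le hTS (mem_powersetCard.1 hT).2.ge)
  exact prod_eq_zero hiT (hS i hiS)

theorem prod_le_esymm [CommSemiring R] [PartialOrder R] [IsOrderedRing R] (f : ι → R)
    (hf : ∀ i, 0 ≤ f i) (S : Finset ι) : ∏ i ∈ S, f i ≤ (univ.val.map f).esymm #S := by
  rw [esymm_map_val]
  exact single_le_sum (f := fun T => ∏ i ∈ T, f i) (fun T _ => prod_nonneg fun i _ => hf i)
    (mem_powersetCard.2 ⟨subset_univ S, rfl⟩)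

theorem esymm_mul_pow_le_prod_add [CommSemiring R] [PartialOrder R] [IsOrderedRing R]
    [DecidableEq ι] (f : ι → R) (hf : ∀ i, 0 ≤ f i) {t : R} (ht : 0 ≤ t) (r : ℕ) :
    (univ.val.map f).esymm r * t ^ (Fintype.card ι - r) ≤ ∏ i, (f i + t) := by
  rw [esymm_map_val, sum_mul, prod_add]
  calc ∑ T ∈ powersetCard r univ, T.prod f * t ^ (Fintype.card ι - r)
      = ∑ T ∈ powersetCard r univ, (∏ i ∈ T, f i) * ∏ _ ∈ univ \ T, t :=
        sum_congr rfl fun T hT => by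
          rw [prod_const, ← compl_eq_univ_sdiff, card_compl, (mem_powersetCard.1 hT).2]
    _ ≤ _ := sum_le_sum_of_subset_of_nonneg
        (fun T hT => mem_powerset.2 (mem_powersetCard.1 hT).1)
        (fun T _ _ => mul_nonneg (prod_nonneg fun i _ => hf i) (prod_nonneg fun _ _ => ht))

theorem esymm_le_prod_add_of_prod_add_le [CommSemiring R] [LinearOrder R] [IsStrictOrderedRing R]
    [DecidableEq ι] (f g : ι → R) (hf : ∀ i, 0 ≤ f i) {S : Finset ι} (hg : ∀ i ∉ S, g i = 0)
    {t : R} (ht : 0 < t) (hfg : ∏ i, (f i + t) ≤ ∏ i, (g i + t)) :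
    (univ.val.map f).esymm #S ≤ ∏ i ∈ S, (g i + t) := by
  have hsplit : ∏ i, (g i + t) = (∏ i ∈ S, (g i + t)) * t ^ (Fintype.card ι - #S) := by
    rw [← prod_mul_prod_compl S, ← card_compl, ← prod_const]
    exact congrArg _ (prod_congr rfl fun i hi => by rw [hg i (mem_compl.1 hi), zero_add])
  refine le_of_mul_le_mul_right ?_ (pow_pos ht (Fintype.card ι - #S))
  exact (esymm_mul_pow_le_prod_add f hf ht.le _).trans (hfg.trans_eq hsplit)

end Esymm

section TopIndices

variable {α : Type*} [LinearOrder α] {n : ℕ}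

/-- The indices of the `r` largest values of `f` (`Tuple.sort f` sorts increasingly). -/
def topIndices (f : Fin n → α) (r : ℕ) : Finset (Fin n) :=
  (univ.filter fun i : Fin n => (i : ℕ) < r).image fun i => Tuple.sort f i.rev

theorem card_topIndices (f : Fin n → α) {r : ℕ} (hr : r ≤ n) : #(topIndices f r) = r := by
  rw [topIndices, card_image_of_injective _
    fun _ _ h => Fin.rev_injective ((Tuple.sort f).injective h),
    Fin.card_filter_val_lt, min_eq_right hr]

theorem prod_topIndices {β : Type*} [CommMonoid β] (f : Fin n → α) (r : ℕ) (g : Fin n → β) :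
    ∏ i ∈ univ.filter (fun i : Fin n => (i : ℕ) < r), g (Tuple.sort f i.rev) =
      ∏ k ∈ topIndices f r, g k :=
  (prod_image fun _ _ _ _ h => Fin.rev_injective ((Tuple.sort f).injective h)).symm

theorem eq_zero_of_notMem_topIndices [Zero α] {f : Fin n → α} (hf : ∀ i, 0 ≤ f i) {r : ℕ}
    (hcard : #{i | f i ≠ 0} ≤ r) {k : Fin n} (hk : k ∉ topIndices f r) : f k = 0 := by
  set σ := Tuple.sort f
  have hj : ((σ.symm k : Fin n) : ℕ) + r < n := by
    by_contra! hge
    refine hk (mem_image.2 ⟨(σ.symm k).rev, ?_, by simp [σ]⟩)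
    simp only [mem_filter, mem_univ, true_and, Fin.val_rev]
    omega
  by_contra hk0
  -- `f ∘ σ` is monotone, so the `n - σ⁻¹ k > r` positions from `σ⁻¹ k` on all carry nonzero values.
  have hpos : ∀ j ∈ Ici (σ.symm k), σ j ∈ ({i | f i ≠ 0} : Finset (Fin n)) := fun j hj => by
    have hmono : f k ≤ f (σ j) := by
      simpa [σ] using Tuple.monotone_sort f (mem_Ici.1 hj)
    simpa using ((lt_of_le_of_ne (hf k) (Ne.symm hk0)).trans_le hmono).ne'
  have hle := card_le_card_of_injOn σ hpos σ.injective.injOn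
  rw [Fin.card_Ici] at hle
  omega

end TopIndices

theorem Matrix.IsHermitian.det_add_smul_one {ι : Type*} [Fintype ι] [DecidableEq ι]
    {A : Matrix ι ι ℝ} (hA : A.IsHermitian) (t : ℝ) :
    (A + t • (1 : Matrix ι ι ℝ)).det = ∏ i, (hA.eigenvalues i + t) := by
  have h := congrArg (Polynomial.eval (-t)) hA.charpoly_eq
  rw [eval_charpoly, Polynomial.eval_prod] at h
  have hneg : A + t • (1 : Matrix ι ι ℝ) = -(scalar ι (-t) - A) := by
    ext i j
    by_cases hij : i = j <;> simp [hij]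
  rw [hneg, det_neg, h, ← card_univ, ← prod_const, ← prod_mul_distrib]
  simp

theorem Matrix.continuous_charpoly_coeff {ι R : Type*} [Fintype ι] [DecidableEq ι] [CommRing R]
    [TopologicalSpace R] [IsTopologicalRing R] (k : ℕ) :
    Continuous fun M : Matrix ι ι R => M.charpoly.coeff k := by
  have h : ∀ M : Matrix ι ι R, M.charpoly.coeff k =
      MvPolynomial.eval (fun p : ι × ι => M p.1 p.2) ((charpoly.univ R ι).coeff k) := by
    intro M
    rw [MvPolynomial.eval, charpoly.univ_coeff_eval₂Hom]
    rfl
  simp_rw [h]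
  exact (MvPolynomial.continuous_eval _).comp (by fun_prop)

theorem Matrix.IsHermitian.esymm_eigenvalues {ι : Type*} [Fintype ι] [DecidableEq ι]
    {A : Matrix ι ι ℝ} (hA : A.IsHermitian) {r : ℕ} (hr : r ≤ Fintype.card ι) :
    (univ.val.map hA.eigenvalues).esymm r = (-1) ^ r * A.charpoly.coeff (Fintype.card ι - r) := by
  have h := Multiset.prod_X_sub_C_coeff (univ.val.map hA.eigenvalues) (k := Fintype.card ι - r)
    (by simp)
  simp only [Multiset.card_map, card_val, card_univ, Nat.sub_sub_self hr, Multiset.map_map,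
    Function.comp_def] at h
  rw [hA.charpoly_eq, Finset.prod]
  simp only [RCLike.ofReal_real_eq_id, id, h, ← mul_assoc, ← mul_pow]
  simp

section Gram

variable {n m : ℕ}

theorem eigenvalues_gram_nonneg (X : Matrix (Fin n) (Fin m) ℝ) (i : Fin n) :
    0 ≤ (isHerm X).eigenvalues i := by
  have hpsd : (X * Xᵀ).PosSemidef := by
    simpa using posSemidef_self_mul_conjTranspose X
  exact hpsd.eigenvalues_nonneg i

theorem card_eigenvalues_gram_ne_zero (X : Matrix (Fin n) (Fin m) ℝ) :
    #{i | (isHerm X).eigenvalues i ≠ 0} = X.rank := by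
  rw [← rank_self_mul_transpose, (isHerm X).rank_eq_card_non_zero_eigs, Fintype.card_subtype]

theorem continuous_esymm_eigenvalues_gram {r : ℕ} (hr : r ≤ n) :
    Continuous fun X : Matrix (Fin n) (Fin m) ℝ =>
      (univ.val.map (isHerm X).eigenvalues).esymm r := by
  simp_rw [fun X => (isHerm X).esymm_eigenvalues (r := r) (by simpa using hr)]
  exact continuous_const.mul ((continuous_charpoly_coeff _).comp (by fun_prop))

theorem prod_eigenvalues_gram_add_le {X Y : Matrix (Fin n) (Fin m) ℝ} {γ : ℝ} (hγ : 0 < γ)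
    (h : fgamma γ X ≤ fgamma γ Y) :
    ∏ i, ((isHerm X).eigenvalues i + γ) ≤ ∏ i, ((isHerm Y).eigenvalues i + γ) := by
  have hpos : ∀ Z : Matrix (Fin n) (Fin m) ℝ, 0 < ∏ i, ((isHerm Z).eigenvalues i + γ) :=
    fun Z => prod_pos fun i _ => add_pos_of_nonneg_of_pos (eigenvalues_gram_nonneg Z i) hγ
  rwa [fgamma, fgamma, (isHerm X).det_add_smul_one, (isHerm Y).det_add_smul_one,
    Real.log_le_log_iff (hpos X) (hpos Y)] at h

theorem esymm_eigenvalues_gram_le_of_tendsto {Xγ : ℝ → Matrix (Fin n) (Fin m) ℝ}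
    {Xbar Xstar : Matrix (Fin n) (Fin m) ℝ}
    (hmin : ∀ γ : ℝ, 0 < γ → fgamma γ (Xγ γ) ≤ fgamma γ Xstar)
    (hlim : Tendsto Xγ (nhdsWithin 0 (Set.Ioi 0)) (nhds Xbar)) :
    (univ.val.map (isHerm Xbar).eigenvalues).esymm Xstar.rank ≤
      (univ.val.map (isHerm Xstar).eigenvalues).esymm Xstar.rank := by
  set S : Finset (Fin n) := {i | (isHerm Xstar).eigenvalues i ≠ 0}
  have hS : ∀ i ∉ S, (isHerm Xstar).eigenvalues i = 0 := by simp [S]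
  rw [← card_eigenvalues_gram_ne_zero, esymm_eq_prod_of_eq_zero_of_notMem _ hS]
  have hrn : #S ≤ n := card_le_univ S |>.trans_eq (Fintype.card_fin n)
  refine le_of_tendsto_of_tendsto (((continuous_esymm_eigenvalues_gram hrn).tendsto _).comp hlim)
    ?_ (eventually_nhdsWithin_of_forall fun γ hγ => esymm_le_prod_add_of_prod_add_le _ _
      (eigenvalues_gram_nonneg _) hS hγ (prod_eigenvalues_gram_add_le hγ (hmin γ hγ)))
  have hcont : Continuous fun γ : ℝ => ∏ i ∈ S, ((isHerm Xstar).eigenvalues i + γ) := by fun_prop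
  simpa using (hcont.tendsto 0).mono_left nhdsWithin_le_nhds

theorem prod_singval_eq_sqrt_prod_topIndices (X : Matrix (Fin n) (Fin m) ℝ) (r : ℕ) :
    ∏ i ∈ univ.filter (fun i : Fin n => (i : ℕ) < r), singval X i =
      √(∏ k ∈ topIndices (isHerm X).eigenvalues r, (isHerm X).eigenvalues k) := by
  rw [Real.sqrt_prod _ fun k _ => eigenvalues_gram_nonneg X k, ← prod_topIndices]
  rfl

end Gram

theorem prod_singval_limit_le_general {n m l : ℕ}
    (L : Matrix (Fin n) (Fin m) ℝ →ₗ[ℝ] (Fin l → ℝ)) (y : Fin l → ℝ)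
    (r : ℕ)
    (Xγ : ℝ → Matrix (Fin n) (Fin m) ℝ)
    (hmin : ∀ γ : ℝ, 0 < γ →
      L (Xγ γ) = y ∧ ∀ X, L X = y → fgamma γ (Xγ γ) ≤ fgamma γ X)
    (Xbar : Matrix (Fin n) (Fin m) ℝ)
    (hlim : Tendsto Xγ (nhdsWithin 0 (Set.Ioi 0)) (nhds Xbar))
    (Xstar : Matrix (Fin n) (Fin m) ℝ) (hXstar : L Xstar = y)
    (hrank : Xstar.rank = r) :
    (∏ i ∈ Finset.univ.filter (fun i : Fin n => (i : ℕ) < r), singval Xbar i)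
      ≤ ∏ i ∈ Finset.univ.filter (fun i : Fin n => (i : ℕ) < r), singval Xstar i := by
  have hrn : r ≤ n := hrank ▸ rank_le_height Xstar
  rw [prod_singval_eq_sqrt_prod_topIndices, prod_singval_eq_sqrt_prod_topIndices]
  refine Real.sqrt_le_sqrt ?_
  calc ∏ k ∈ topIndices (isHerm Xbar).eigenvalues r, (isHerm Xbar).eigenvalues k
      ≤ (univ.val.map (isHerm Xbar).eigenvalues).esymm r :=
        (prod_le_esymm _ (eigenvalues_gram_nonneg Xbar) _).trans_eq (by rw [card_topIndices _ hrn])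
    _ ≤ (univ.val.map (isHerm Xstar).eigenvalues).esymm r := hrank ▸
        esymm_eigenvalues_gram_le_of_tendsto (fun γ hγ => (hmin γ hγ).2 Xstar hXstar) hlim
    _ = ∏ k ∈ topIndices (isHerm Xstar).eigenvalues r, (isHerm Xstar).eigenvalues k := by
        rw [← esymm_eq_prod_of_eq_zero_of_notMem, card_topIndices _ hrn]
        exact fun k => eq_zero_of_notMem_topIndices (eigenvalues_gram_nonneg Xstar)
          (card_eigenvalues_gram_ne_zero Xstar ▸ hrank.le)

/-- Direct comparison: any rank-`r` solution `X*` of `L(X) = y` has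
`∏_{i=1}^r σ_i(X*) ≥ ∏_{i=1}^r σ_i(X̄)` where `X̄` is a limit of global
minimizers of `f_γ` over `L⁻¹(y)` as `γ → 0⁺` and `r` is the minimal rank. -/
theorem prod_singval_limit_le {n m l : ℕ} (hnm : n ≤ m)
    (L : Matrix (Fin n) (Fin m) ℝ →ₗ[ℝ] (Fin l → ℝ)) (y : Fin l → ℝ)
    (r : ℕ) (hr : IsLeast {k : ℕ | ∃ X, L X = y ∧ X.rank = k} r)
    (Xγ : ℝ → Matrix (Fin n) (Fin m) ℝ)
    (hmin : ∀ γ : ℝ, 0 < γ →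
      L (Xγ γ) = y ∧ ∀ X, L X = y → fgamma γ (Xγ γ) ≤ fgamma γ X)
    (Xbar : Matrix (Fin n) (Fin m) ℝ)
    (hlim : Tendsto Xγ (nhdsWithin 0 (Set.Ioi 0)) (nhds Xbar))
    (Xstar : Matrix (Fin n) (Fin m) ℝ) (hXstar : L Xstar = y)
    (hrank : Xstar.rank = r) :
    (∏ i ∈ Finset.univ.filter (fun i : Fin n => (i : ℕ) < r), singval Xbar i)
      ≤ ∏ i ∈ Finset.univ.filter (fun i : Fin n => (i : ℕ) < r), singval Xstar i :=
  prod_singval_limit_le_general L y r Xγ hmin Xbar hlim Xstar hXstar hrank
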